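/- Let μ > 0, λ > 0, τ > 0, N ≥ 1, and let u⁰, …, u^N and w⁰, …, w^N be periodic grid functions satisfying the nonlinear compact difference scheme: (i) w^q_p = (δ_xx u^q)_p − (h²/12)(δ_xx w^q)_p for all 0 ≤ q ≤ N and p ∈ ℤ; (ii) for all 1 ≤ q ≤ N and p ∈ ℤ, with ū^q = (u^q + u^{q−1})/2 and w̄^q = (w^q + w^{q−1})/2: (u^q_p − u^{q−1}_p)/τ − μ·(w^q_p − w^{q−1}_p)/τ + Ψ(ū^q, ū^q)_p − (h²/2)·Ψ(w̄^q, ū^q)_p + (Δ_x ū^q)_p − (h²/6)·(Δ_x w̄^q)_p − λ·w̄^q_p = 0. Define the discrete energy E^q = ‖u^q‖² + μ·( |u^q|_1² + (h²/12)‖w^q‖² − (h⁴/144)|w^q|_1² ) + 2λτ·∑_{n=1}^{q} ( |ū^n|_1² + (h²/12)‖w̄^n‖² − (h⁴/144)|w̄^n|_1² ). Then E^q = E⁰ for all 0 ≤ q ≤ N. -/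

import Mathlib

open Finset

/-- A periodic grid function with period `M`. -/
def Periodic (M : ℕ) (w : ℤ → ℝ) : Prop := ∀ p : ℤ, w (p + (M : ℤ)) = w p

/-- Discrete inner product `⟨v,w⟩ = h ∑_{p=1}^M v_p w_p`. -/
noncomputable def ip (M : ℕ) (h : ℝ) (v w : ℤ → ℝ) : ℝ :=
  h * ∑ p ∈ Finset.Icc (1 : ℤ) (M : ℤ), v p * w p

/-- Discrete L² norm `‖w‖ = √⟨w,w⟩`. -/
noncomputable def nrm (M : ℕ) (h : ℝ) (w : ℤ → ℝ) : ℝ := Real.sqrt (ip M h w w)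

/-- Discrete H¹ seminorm `|w|₁`. -/
noncomputable def snorm1 (M : ℕ) (h : ℝ) (w : ℤ → ℝ) : ℝ :=
  Real.sqrt (h * ∑ p ∈ Finset.Icc (1 : ℤ) (M : ℤ), ((w p - w (p - 1)) / h) ^ 2)

/-- Centered difference operator `(Δ_x w)_p = (w_{p+1} − w_{p−1})/(2h)`. -/
noncomputable def Dx (h : ℝ) (w : ℤ → ℝ) : ℤ → ℝ :=
  fun p => (w (p + 1) - w (p - 1)) / (2 * h)

/-- Second difference operator `(δ_xx w)_p = (w_{p+1} − 2w_p + w_{p−1})/h²`. -/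
noncomputable def Dxx (h : ℝ) (w : ℤ → ℝ) : ℤ → ℝ :=
  fun p => (w (p + 1) - 2 * w p + w (p - 1)) / h ^ 2

/-- Discrete nonlinear operator `Ψ(v,w)_p = (1/3)(v_p (Δ_x w)_p + (Δ_x (vw))_p)`. -/
noncomputable def Psi (h : ℝ) (v w : ℤ → ℝ) : ℤ → ℝ :=
  fun p => (1 / 3) * (v p * Dx h w p + Dx h (fun q => v q * w q) p)
/-- Discrete energy `E^q` of the compact difference scheme. -/
noncomputable def energy (M : ℕ) (h μ lam τ : ℝ) (u w : ℕ → ℤ → ℝ) (q : ℕ) : ℝ :=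
  (nrm M h (u q)) ^ 2
    + μ * ((snorm1 M h (u q)) ^ 2 + h ^ 2 / 12 * (nrm M h (w q)) ^ 2
            - h ^ 4 / 144 * (snorm1 M h (w q)) ^ 2)
    + 2 * lam * τ *
        ∑ n ∈ Finset.Icc 1 q,
          ((snorm1 M h (fun p => (u n p + u (n - 1) p) / 2)) ^ 2
            + h ^ 2 / 12 * (nrm M h (fun p => (w n p + w (n - 1) p) / 2)) ^ 2
            - h ^ 4 / 144 * (snorm1 M h (fun p => (w n p + w (n - 1) p) / 2)) ^ 2)


section EnergyAux
variable {M : ℕ} {h : ℝ}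

lemma sum_shift_right {f : ℤ → ℝ} (hf : Periodic M f) :
    ∑ p ∈ Icc (1:ℤ) (M:ℤ), f (p+1) = ∑ p ∈ Icc (1:ℤ) (M:ℤ), f p := by
  have key : ∑ p ∈ Icc (2:ℤ) ((M:ℤ)+1), f p = ∑ p ∈ Icc (1:ℤ) (M:ℤ), f (p+1) := by
    rw [show (2:ℤ) = 1 + 1 by ring, ← Finset.map_add_right_Icc, Finset.sum_map]
    rfl
  have split1 : Icc (1:ℤ) ((M:ℤ)+1) = insert 1 (Icc 2 ((M:ℤ)+1)) := by
    ext p; simp only [Finset.mem_Icc, Finset.mem_insert]; omega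
  have split2 : Icc (1:ℤ) ((M:ℤ)+1) = insert ((M:ℤ)+1) (Icc 1 (M:ℤ)) := by
    ext p; simp only [Finset.mem_Icc, Finset.mem_insert]; omega
  have h1 : (1:ℤ) ∉ Icc (2:ℤ) ((M:ℤ)+1) := by simp
  have h2 : ((M:ℤ)+1) ∉ Icc (1:ℤ) (M:ℤ) := by simp
  have e1 : ∑ p ∈ Icc (1:ℤ) ((M:ℤ)+1), f p
      = f 1 + ∑ p ∈ Icc (2:ℤ) ((M:ℤ)+1), f p := by rw [split1, Finset.sum_insert h1]
  have e2 : ∑ p ∈ Icc (1:ℤ) ((M:ℤ)+1), f p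
      = f ((M:ℤ)+1) + ∑ p ∈ Icc (1:ℤ) (M:ℤ), f p := by rw [split2, Finset.sum_insert h2]
  have e3 : f ((M:ℤ)+1) = f 1 := by
    rw [show (M:ℤ)+1 = 1 + (M:ℤ) by ring]; exact hf 1
  rw [← key]; linarith

lemma sum_shift_left {f : ℤ → ℝ} (hf : Periodic M f) :
    ∑ p ∈ Icc (1:ℤ) (M:ℤ), f (p-1) = ∑ p ∈ Icc (1:ℤ) (M:ℤ), f p := by
  have hg : Periodic M (fun p => f (p - 1)) := fun p => by
    show f (p + (M:ℤ) - 1) = f (p - 1)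
    rw [show p + (M:ℤ) - 1 = (p-1) + M by ring, hf]
  have := sum_shift_right hg
  simp only [add_sub_cancel_right] at this
  exact this.symm

lemma I1 {v z : ℤ → ℝ} (hv : Periodic M v) (hz : Periodic M z) :
    ∑ p ∈ Icc (1:ℤ) (M:ℤ), v (p+1) * z p = ∑ p ∈ Icc (1:ℤ) (M:ℤ), v p * z (p-1) := by
  have hper : Periodic M (fun p => v (p+1) * z p) := fun p => by
    show v (p + (M:ℤ) + 1) * z (p + M) = _
    rw [show p + (M:ℤ) + 1 = (p+1) + M by ring, hv, hz]
  have := sum_shift_left hper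
  simp only [sub_add_cancel] at this
  exact this.symm

lemma I2 {v z : ℤ → ℝ} (hv : Periodic M v) (hz : Periodic M z) :
    ∑ p ∈ Icc (1:ℤ) (M:ℤ), v (p-1) * z p = ∑ p ∈ Icc (1:ℤ) (M:ℤ), v p * z (p+1) := by
  have hper : Periodic M (fun p => v (p-1) * z p) := fun p => by
    show v (p + (M:ℤ) - 1) * z (p + M) = _
    rw [show p + (M:ℤ) - 1 = (p-1) + M by ring, hv, hz]
  have := sum_shift_right hper
  simp only [add_sub_cancel_right] at this
  exact this.symm

lemma I0 {v z : ℤ → ℝ} (hv : Periodic M v) (hz : Periodic M z) :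
    ∑ p ∈ Icc (1:ℤ) (M:ℤ), v (p-1) * z (p-1) = ∑ p ∈ Icc (1:ℤ) (M:ℤ), v p * z p := by
  have hper : Periodic M (fun p => v p * z p) := fun p => by
    show v (p + (M:ℤ)) * z (p + M) = _
    rw [hv, hz]
  exact sum_shift_left hper

/-- summation-by-parts bilinear form -/
noncomputable def sbp (M : ℕ) (h : ℝ) (v z : ℤ → ℝ) : ℝ :=
  h * ∑ p ∈ Finset.Icc (1 : ℤ) (M : ℤ), ((v p - v (p-1))/h) * ((z p - z (p-1))/h)

-- Periodicity closure lemmas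
lemma per_Dx {f : ℤ → ℝ} (hf : Periodic M f) : Periodic M (Dx h f) := fun p => by
  show (f (p + (M:ℤ) + 1) - f (p + (M:ℤ) - 1)) / (2*h) = _
  rw [show p + (M:ℤ) + 1 = (p+1) + M by ring, show p + (M:ℤ) - 1 = (p-1) + M by ring, hf, hf]
  rfl

lemma per_Dxx {f : ℤ → ℝ} (hf : Periodic M f) : Periodic M (Dxx h f) := fun p => by
  show (f (p + (M:ℤ) + 1) - 2 * f (p + M) + f (p + (M:ℤ) - 1)) / h^2 = _
  rw [show p + (M:ℤ) + 1 = (p+1) + M by ring, show p + (M:ℤ) - 1 = (p-1) + M by ring, hf, hf, hf]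
  rfl

lemma per_mul {f g : ℤ → ℝ} (hf : Periodic M f) (hg : Periodic M g) :
    Periodic M (fun p => f p * g p) := fun p => by
  show f (p + (M:ℤ)) * g (p + M) = _
  rw [hf, hg]

-- ip linearity / congruence
lemma ip_congr_left {f f' z : ℤ → ℝ} (hf : ∀ p, f p = f' p) : ip M h f z = ip M h f' z := by
  rw [show f = f' from funext hf]

lemma ip_congr_right {f z z' : ℤ → ℝ} (hz : ∀ p, z p = z' p) : ip M h f z = ip M h f z' := by
  rw [show z = z' from funext hz]

lemma ip_comm {f z : ℤ → ℝ} : ip M h f z = ip M h z f := by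
  unfold ip; congr 1; exact Finset.sum_congr rfl fun p _ => mul_comm _ _

lemma ip_add_left {f g z : ℤ → ℝ} :
    ip M h (fun p => f p + g p) z = ip M h f z + ip M h g z := by
  unfold ip; rw [← mul_add, ← Finset.sum_add_distrib]
  congr 1; exact Finset.sum_congr rfl fun p _ => by ring

lemma ip_sub_left {f g z : ℤ → ℝ} :
    ip M h (fun p => f p - g p) z = ip M h f z - ip M h g z := by
  unfold ip; rw [← mul_sub, ← Finset.sum_sub_distrib]
  congr 1; exact Finset.sum_congr rfl fun p _ => by ring

lemma ip_smul_left {f z : ℤ → ℝ} (c : ℝ) :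
    ip M h (fun p => c * f p) z = c * ip M h f z := by
  unfold ip
  rw [Finset.sum_congr rfl (fun p _ => by ring :
    ∀ p ∈ Icc (1:ℤ) (M:ℤ), (c * f p) * z p = c * (f p * z p)), ← Finset.mul_sum]
  ring

lemma ip_add_right {f g z : ℤ → ℝ} :
    ip M h z (fun p => f p + g p) = ip M h z f + ip M h z g := by
  rw [ip_comm, ip_add_left, ip_comm (f := f), ip_comm (f := g)]

lemma ip_smul_right {f z : ℤ → ℝ} (c : ℝ) :
    ip M h z (fun p => c * f p) = c * ip M h z f := by
  rw [ip_comm, ip_smul_left, ip_comm]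

-- skew-adjointness of Dx
lemma Dx_skew {v z : ℤ → ℝ} (hv : Periodic M v) (hz : Periodic M z) :
    ip M h (Dx h v) z = - ip M h v (Dx h z) := by
  unfold ip Dx
  have i1 := I1 hv hz
  have i2 := I2 hv hz
  have e1 : ∑ p ∈ Icc (1:ℤ) (M:ℤ), (v (p+1) - v (p-1)) / (2*h) * z p
      = (1/(2*h)) * (∑ p ∈ Icc (1:ℤ) (M:ℤ), v (p+1) * z p)
        - (1/(2*h)) * (∑ p ∈ Icc (1:ℤ) (M:ℤ), v (p-1) * z p) := by
    rw [Finset.mul_sum, Finset.mul_sum, ← Finset.sum_sub_distrib]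
    exact Finset.sum_congr rfl fun p _ => by ring
  have e2 : ∑ p ∈ Icc (1:ℤ) (M:ℤ), v p * ((z (p+1) - z (p-1)) / (2*h))
      = (1/(2*h)) * (∑ p ∈ Icc (1:ℤ) (M:ℤ), v p * z (p+1))
        - (1/(2*h)) * (∑ p ∈ Icc (1:ℤ) (M:ℤ), v p * z (p-1)) := by
    rw [Finset.mul_sum, Finset.mul_sum, ← Finset.sum_sub_distrib]
    exact Finset.sum_congr rfl fun p _ => by ring
  rw [e1, e2]
  linear_combination (h/(2*h)) * i1 - (h/(2*h)) * i2

lemma Dx_skew_self {v : ℤ → ℝ} (hv : Periodic M v) : ip M h (Dx h v) v = 0 := by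
  have := Dx_skew (h := h) hv hv
  rw [ip_comm (f := v)] at this
  linarith

-- self-adjointness of Dxx
lemma Dxx_symm {v z : ℤ → ℝ} (hv : Periodic M v) (hz : Periodic M z) :
    ip M h (Dxx h v) z = ip M h v (Dxx h z) := by
  unfold ip Dxx
  have i1 := I1 hv hz
  have i2 := I2 hv hz
  have e1 : ∑ p ∈ Icc (1:ℤ) (M:ℤ), (v (p+1) - 2 * v p + v (p-1)) / h^2 * z p
      = (1/h^2) * (∑ p ∈ Icc (1:ℤ) (M:ℤ), v (p+1) * z p)
        - (2/h^2) * (∑ p ∈ Icc (1:ℤ) (M:ℤ), v p * z p)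
        + (1/h^2) * (∑ p ∈ Icc (1:ℤ) (M:ℤ), v (p-1) * z p) := by
    rw [Finset.mul_sum, Finset.mul_sum, Finset.mul_sum, ← Finset.sum_sub_distrib,
      ← Finset.sum_add_distrib]
    exact Finset.sum_congr rfl fun p _ => by ring
  have e2 : ∑ p ∈ Icc (1:ℤ) (M:ℤ), v p * ((z (p+1) - 2 * z p + z (p-1)) / h^2)
      = (1/h^2) * (∑ p ∈ Icc (1:ℤ) (M:ℤ), v p * z (p+1))
        - (2/h^2) * (∑ p ∈ Icc (1:ℤ) (M:ℤ), v p * z p)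
        + (1/h^2) * (∑ p ∈ Icc (1:ℤ) (M:ℤ), v p * z (p-1)) := by
    rw [Finset.mul_sum, Finset.mul_sum, Finset.mul_sum, ← Finset.sum_sub_distrib,
      ← Finset.sum_add_distrib]
    exact Finset.sum_congr rfl fun p _ => by ring
  rw [e1, e2]
  linear_combination (h/h^2) * i1 + (h/h^2) * i2

-- summation by parts: ⟨Dxx v, z⟩ = −sbp v z
lemma Dxx_sbp {v z : ℤ → ℝ} (hv : Periodic M v) (hz : Periodic M z) :
    ip M h (Dxx h v) z = - sbp M h v z := by
  unfold ip Dxx sbp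
  have i1 := I1 hv hz
  have i0 := I0 hv hz
  have i2 := I2 hv hz
  have e1 : ∑ p ∈ Icc (1:ℤ) (M:ℤ), (v (p+1) - 2 * v p + v (p-1)) / h^2 * z p
      = (1/h^2) * (∑ p ∈ Icc (1:ℤ) (M:ℤ), v (p+1) * z p)
        - (2/h^2) * (∑ p ∈ Icc (1:ℤ) (M:ℤ), v p * z p)
        + (1/h^2) * (∑ p ∈ Icc (1:ℤ) (M:ℤ), v (p-1) * z p) := by
    rw [Finset.mul_sum, Finset.mul_sum, Finset.mul_sum, ← Finset.sum_sub_distrib,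
      ← Finset.sum_add_distrib]
    exact Finset.sum_congr rfl fun p _ => by ring
  have e2 : ∑ p ∈ Icc (1:ℤ) (M:ℤ), ((v p - v (p-1))/h) * ((z p - z (p-1))/h)
      = (1/h^2) * (∑ p ∈ Icc (1:ℤ) (M:ℤ), v p * z p)
        - (1/h^2) * (∑ p ∈ Icc (1:ℤ) (M:ℤ), v p * z (p-1))
        - (1/h^2) * (∑ p ∈ Icc (1:ℤ) (M:ℤ), v (p-1) * z p)
        + (1/h^2) * (∑ p ∈ Icc (1:ℤ) (M:ℤ), v (p-1) * z (p-1)) := by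
    rw [Finset.mul_sum, Finset.mul_sum, Finset.mul_sum, Finset.mul_sum,
      ← Finset.sum_sub_distrib, ← Finset.sum_sub_distrib, ← Finset.sum_add_distrib]
    exact Finset.sum_congr rfl fun p _ => by ring
  rw [e1, e2]
  linear_combination (h/h^2) * i1 + (h/h^2) * i0

lemma sbp_symm {v z : ℤ → ℝ} : sbp M h v z = sbp M h z v := by
  unfold sbp; congr 1; exact Finset.sum_congr rfl fun p _ => by ring

-- Psi orthogonality: ⟨Ψ(v,z), z⟩ = 0
lemma Psi_ortho {v z : ℤ → ℝ} (hv : Periodic M v) (hz : Periodic M z) :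
    ip M h (Psi h v z) z = 0 := by
  have step1 : ip M h (Psi h v z) z
      = (1/3) * (ip M h (fun p => v p * Dx h z p) z
          + ip M h (Dx h (fun q => v q * z q)) z) := by
    rw [← ip_add_left, ← ip_smul_left]
    exact ip_congr_left fun p => rfl
  have hA : ip M h (fun p => v p * Dx h z p) z
      = ip M h (Dx h z) (fun q => v q * z q) := by
    unfold ip; congr 1; exact Finset.sum_congr rfl fun p _ => by ring
  have hB : ip M h (Dx h (fun q => v q * z q)) z
      = - ip M h (fun q => v q * z q) (Dx h z) := Dx_skew (per_mul hv hz) hz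
  have hC : ip M h (fun q => v q * z q) (Dx h z)
      = ip M h (Dx h z) (fun q => v q * z q) := ip_comm
  rw [step1, hA, hB, hC]; ring

lemma Dx_Dxx_comm (f : ℤ → ℝ) (p : ℤ) : Dx h (Dxx h f) p = Dxx h (Dx h f) p := by
  simp only [Dx, Dxx]
  simp only [show ∀ q : ℤ, q + 1 - 1 = q from fun q => by ring,
    show ∀ q : ℤ, q - 1 + 1 = q from fun q => by ring]
  ring

/-- ⟨W, U'⟩ = −(sbp U U' + c⟨W,W'⟩ − c² sbp W W') for two relation pairs. -/
lemma relG {U W U' W' : ℤ → ℝ} (hU : Periodic M U) (hW : Periodic M W)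
    (hU' : Periodic M U') (hW' : Periodic M W')
    (rel : ∀ p, W p = Dxx h U p - h^2/12 * Dxx h W p)
    (rel' : ∀ p, W' p = Dxx h U' p - h^2/12 * Dxx h W' p) :
    ip M h W U' = -(sbp M h U U' + h^2/12 * ip M h W W'
      - (h^2/12)^2 * sbp M h W W') := by
  have e1 : ip M h W U' = ip M h (fun p => Dxx h U p - h^2/12 * Dxx h W p) U' :=
    ip_congr_left rel
  rw [e1, ip_sub_left]
  have e2 : ip M h (fun p => h^2/12 * Dxx h W p) U' = h^2/12 * ip M h (Dxx h W) U' :=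
    ip_smul_left _
  rw [e2, Dxx_sbp hU hU', Dxx_symm hW hU']
  have e3 : ip M h W (Dxx h U')
      = ip M h W (fun p => W' p + h^2/12 * Dxx h W' p) :=
    ip_congr_right fun p => by have := rel' p; linarith
  rw [e3, ip_add_right, ip_smul_right, ip_comm (f := W) (z := Dxx h W'),
    Dxx_sbp hW' hW, sbp_symm (v := W') (z := W)]
  ring

/-- symmetry of the pairing -/
lemma relG_symm {U W U' W' : ℤ → ℝ} (hU : Periodic M U) (hW : Periodic M W)
    (hU' : Periodic M U') (hW' : Periodic M W')
    (rel : ∀ p, W p = Dxx h U p - h^2/12 * Dxx h W p)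
    (rel' : ∀ p, W' p = Dxx h U' p - h^2/12 * Dxx h W' p) :
    ip M h W U' = ip M h W' U := by
  rw [relG hU hW hU' hW' rel rel', relG hU' hW' hU hW rel' rel,
    sbp_symm (v := U') (z := U), ip_comm (f := W') (z := W), sbp_symm (v := W') (z := W)]

/-- ⟨Δ_x W, U⟩ = 0 for a relation pair. -/
lemma relX {U W : ℤ → ℝ} (hU : Periodic M U) (hW : Periodic M W)
    (rel : ∀ p, W p = Dxx h U p - h^2/12 * Dxx h W p) :
    ip M h (Dx h W) U = 0 := by
  set c : ℝ := h^2/12 with hc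
  -- auxiliary zero: ⟨Dx(Dxx W), W⟩ = 0
  have aux0 : ip M h (Dx h (Dxx h W)) W = 0 := by
    have a1 : ip M h (Dx h (Dxx h W)) W = - ip M h (Dxx h W) (Dx h W) :=
      Dx_skew (per_Dxx hW) hW
    have a2 : ip M h (Dx h (Dxx h W)) W = ip M h (Dxx h (Dx h W)) W :=
      ip_congr_left (Dx_Dxx_comm W)
    have a3 : ip M h (Dxx h (Dx h W)) W = ip M h (Dx h W) (Dxx h W) :=
      Dxx_symm (per_Dx hW) hW
    have a4 : ip M h (Dx h W) (Dxx h W) = ip M h (Dxx h W) (Dx h W) := ip_comm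
    linarith
  have aux0' : ip M h (Dx h W) (Dxx h W) = 0 := by
    have t1 : ip M h (Dx h W) (Dxx h W) = ip M h (Dxx h (Dx h W)) W :=
      (Dxx_symm (per_Dx hW) hW).symm
    have t2 : ip M h (Dxx h (Dx h W)) W = ip M h (Dx h (Dxx h W)) W :=
      ip_congr_left fun p => (Dx_Dxx_comm W p).symm
    rw [t1, t2, aux0]
  -- ⟨Dx U, Dxx W⟩ = 0
  have aux1 : ip M h (Dx h U) (Dxx h W) = 0 := by
    have b1 : ip M h (Dx h U) (Dxx h W) = ip M h (Dxx h (Dx h U)) W :=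
      (Dxx_symm (per_Dx hU) hW).symm
    have b2 : ip M h (Dxx h (Dx h U)) W = ip M h (Dx h (Dxx h U)) W :=
      (ip_congr_left (Dx_Dxx_comm U)).symm
    have b3 : ip M h (Dx h (Dxx h U)) W
        = ip M h (Dx h (fun p => W p + c * Dxx h W p)) W := by
      apply ip_congr_left
      intro p
      simp only [Dx]
      have r1 := rel (p + 1)
      have r2 := rel (p - 1)
      linear_combination (r2 - r1) / (2 * h)
    have b4 : ip M h (Dx h (fun p => W p + c * Dxx h W p)) W
        = ip M h (fun p => Dx h W p + c * Dx h (Dxx h W) p) W := by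
      apply ip_congr_left
      intro p
      simp only [Dx]
      ring
    have b5 : ip M h (fun p => Dx h W p + c * Dx h (Dxx h W) p) W
        = ip M h (Dx h W) W + c * ip M h (Dx h (Dxx h W)) W := by
      rw [ip_add_left, ip_smul_left]
    rw [b1, b2, b3, b4, b5, Dx_skew_self hW, aux0]
    ring
  -- main computation: X = −X
  have main : ip M h (Dx h W) U = - ip M h (Dx h W) U := by
    have m1 : ip M h (Dx h W) U
        = ip M h (fun p => Dx h (Dxx h U) p - c * Dx h (Dxx h W) p) U := by
      apply ip_congr_left
      intro p
      simp only [Dx]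
      have r1 := rel (p + 1)
      have r2 := rel (p - 1)
      linear_combination (r1 - r2) / (2 * h)
    have m2 : ip M h (fun p => Dx h (Dxx h U) p - c * Dx h (Dxx h W) p) U
        = ip M h (Dx h (Dxx h U)) U - c * ip M h (Dx h (Dxx h W)) U := by
      rw [ip_sub_left, ip_smul_left]
    -- first piece
    have p1 : ip M h (Dx h (Dxx h U)) U = - ip M h (Dx h W) U := by
      have q1 : ip M h (Dx h (Dxx h U)) U = ip M h (Dxx h (Dx h U)) U :=
        ip_congr_left (Dx_Dxx_comm U)
      have q2 : ip M h (Dxx h (Dx h U)) U = ip M h (Dx h U) (Dxx h U) :=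
        Dxx_symm (per_Dx hU) hU
      have q3 : ip M h (Dx h U) (Dxx h U)
          = ip M h (Dx h U) (fun p => W p + c * Dxx h W p) := by
        apply ip_congr_right
        intro p
        have := rel p
        linear_combination -this
      have q4 : ip M h (Dx h U) (fun p => W p + c * Dxx h W p)
          = ip M h (Dx h U) W + c * ip M h (Dx h U) (Dxx h W) := by
        rw [ip_add_right, ip_smul_right]
      have q5 : ip M h (Dx h U) W = - ip M h U (Dx h W) := Dx_skew hU hW
      have q6 : ip M h U (Dx h W) = ip M h (Dx h W) U := ip_comm
      rw [q1, q2, q3, q4, q5, q6, aux1]; ring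
    -- second piece
    have p2 : ip M h (Dx h (Dxx h W)) U = 0 := by
      have q1 : ip M h (Dx h (Dxx h W)) U = ip M h (Dxx h (Dx h W)) U :=
        ip_congr_left (Dx_Dxx_comm W)
      have q2 : ip M h (Dxx h (Dx h W)) U = ip M h (Dx h W) (Dxx h U) :=
        Dxx_symm (per_Dx hW) hU
      have q3 : ip M h (Dx h W) (Dxx h U)
          = ip M h (Dx h W) (fun p => W p + c * Dxx h W p) := by
        apply ip_congr_right
        intro p
        have := rel p
        linear_combination -this
      have q4 : ip M h (Dx h W) (fun p => W p + c * Dxx h W p)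
          = ip M h (Dx h W) W + c * ip M h (Dx h W) (Dxx h W) := by
        rw [ip_add_right, ip_smul_right]
      rw [q1, q2, q3, q4, Dx_skew_self hW, aux0']
      ring
    have e := m1.trans m2
    rw [p1, p2] at e
    linarith
  linarith

lemma per_avg {f g : ℤ → ℝ} (hf : Periodic M f) (hg : Periodic M g) :
    Periodic M (fun p => (f p + g p) / 2) := fun p => by
  show (f (p + (M:ℤ)) + g (p + M)) / 2 = _
  rw [hf, hg]

lemma nrm_sq (hh : 0 < h) (v : ℤ → ℝ) : nrm M h v ^ 2 = ip M h v v := by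
  apply Real.sq_sqrt
  exact mul_nonneg hh.le (Finset.sum_nonneg fun p _ => mul_self_nonneg _)

lemma snorm1_sq (hh : 0 < h) (v : ℤ → ℝ) : snorm1 M h v ^ 2 = sbp M h v v := by
  unfold snorm1 sbp
  rw [Real.sq_sqrt]
  · congr 1
    exact Finset.sum_congr rfl fun p _ => by rw [sq]
  · exact mul_nonneg hh.le (Finset.sum_nonneg fun p _ => sq_nonneg _)

lemma ip_double {f a b : ℤ → ℝ} :
    ip M h f (fun p => a p + b p) = 2 * ip M h f (fun p => (a p + b p) / 2) := by
  simp only [ip]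
  rw [Finset.sum_congr rfl (fun p _ => by ring :
    ∀ p ∈ Icc (1:ℤ) (M:ℤ), f p * (a p + b p) = 2 * (f p * ((a p + b p)/2))),
    ← Finset.mul_sum]
  ring

/-- One step of energy conservation. -/
lemma step (M : ℕ) (h : ℝ) (hh : 0 < h)
    (μ lam τ : ℝ) (hτ : 0 < τ)
    (N : ℕ) (u w : ℕ → ℤ → ℝ)
    (hu : ∀ q ≤ N, Periodic M (u q)) (hw : ∀ q ≤ N, Periodic M (w q))
    (hrel : ∀ q ≤ N, ∀ p : ℤ, w q p = Dxx h (u q) p - h ^ 2 / 12 * Dxx h (w q) p)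
    (hscheme : ∀ q, 1 ≤ q → q ≤ N → ∀ p : ℤ,
      (u q p - u (q - 1) p) / τ - μ * ((w q p - w (q - 1) p) / τ)
        + Psi h (fun r => (u q r + u (q - 1) r) / 2) (fun r => (u q r + u (q - 1) r) / 2) p
        - h ^ 2 / 2 *
            Psi h (fun r => (w q r + w (q - 1) r) / 2) (fun r => (u q r + u (q - 1) r) / 2) p
        + Dx h (fun r => (u q r + u (q - 1) r) / 2) p
        - h ^ 2 / 6 * Dx h (fun r => (w q r + w (q - 1) r) / 2) p
        - lam * ((w q p + w (q - 1) p) / 2) = 0)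
    (k : ℕ) (hk : k + 1 ≤ N) :
    energy M h μ lam τ u w (k+1) = energy M h μ lam τ u w k := by
  have hτ' : τ ≠ 0 := ne_of_gt hτ
  have hs := hscheme (k+1) (by omega) hk
  simp only [Nat.add_sub_cancel] at hs
  have hua : Periodic M (u (k+1)) := hu _ hk
  have hub : Periodic M (u k) := hu _ (by omega)
  have hwa : Periodic M (w (k+1)) := hw _ hk
  have hwb : Periodic M (w k) := hw _ (by omega)
  have hrela := hrel (k+1) hk
  have hrelb := hrel k (by omega)
  have hUB : Periodic M (fun r => (u (k+1) r + u k r) / 2) := per_avg hua hub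
  have hWB : Periodic M (fun r => (w (k+1) r + w k r) / 2) := per_avg hwa hwb
  have hg : Periodic M (fun p => u (k+1) p + u k p) := fun p => by
    show u (k+1) (p + (M:ℤ)) + u k (p + M) = _
    rw [hua, hub]
  -- averaged relation
  have relbar : ∀ p, (fun r => (w (k+1) r + w k r) / 2) p
      = Dxx h (fun r => (u (k+1) r + u k r) / 2) p
        - h^2/12 * Dxx h (fun r => (w (k+1) r + w k r) / 2) p := by
    intro p
    have ra := hrela p
    have rb := hrelb p
    simp only [Dxx] at ra rb ⊢
    linear_combination ra / 2 + rb / 2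
  -- key pairing
  have key : h * ∑ p ∈ Icc (1:ℤ) (M:ℤ),
      ((u (k+1) p - u k p) / τ - μ * ((w (k+1) p - w k p) / τ)
        + Psi h (fun r => (u (k+1) r + u k r) / 2) (fun r => (u (k+1) r + u k r) / 2) p
        - h ^ 2 / 2 *
            Psi h (fun r => (w (k+1) r + w k r) / 2) (fun r => (u (k+1) r + u k r) / 2) p
        + Dx h (fun r => (u (k+1) r + u k r) / 2) p
        - h ^ 2 / 6 * Dx h (fun r => (w (k+1) r + w k r) / 2) p
        - lam * ((w (k+1) p + w k p) / 2)) * (u (k+1) p + u k p) = 0 := by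
    rw [Finset.sum_eq_zero (fun p _ => by rw [hs p, zero_mul]), mul_zero]
  -- decompose the pairing
  have decomp : h * ∑ p ∈ Icc (1:ℤ) (M:ℤ),
      ((u (k+1) p - u k p) / τ - μ * ((w (k+1) p - w k p) / τ)
        + Psi h (fun r => (u (k+1) r + u k r) / 2) (fun r => (u (k+1) r + u k r) / 2) p
        - h ^ 2 / 2 *
            Psi h (fun r => (w (k+1) r + w k r) / 2) (fun r => (u (k+1) r + u k r) / 2) p
        + Dx h (fun r => (u (k+1) r + u k r) / 2) p
        - h ^ 2 / 6 * Dx h (fun r => (w (k+1) r + w k r) / 2) p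
        - lam * ((w (k+1) p + w k p) / 2)) * (u (k+1) p + u k p)
      = (1/τ) * ip M h (fun p => u (k+1) p - u k p) (fun p => u (k+1) p + u k p)
        - (μ/τ) * ip M h (fun p => w (k+1) p - w k p) (fun p => u (k+1) p + u k p)
        + ip M h (Psi h (fun r => (u (k+1) r + u k r) / 2) (fun r => (u (k+1) r + u k r) / 2))
            (fun p => u (k+1) p + u k p)
        - h^2/2 * ip M h (Psi h (fun r => (w (k+1) r + w k r) / 2) (fun r => (u (k+1) r + u k r) / 2))
            (fun p => u (k+1) p + u k p)
        + ip M h (Dx h (fun r => (u (k+1) r + u k r) / 2)) (fun p => u (k+1) p + u k p)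
        - h^2/6 * ip M h (Dx h (fun r => (w (k+1) r + w k r) / 2)) (fun p => u (k+1) p + u k p)
        - lam * ip M h (fun r => (w (k+1) r + w k r) / 2) (fun p => u (k+1) p + u k p) := by
    simp only [ip]
    rw [Finset.sum_congr rfl (fun p _ => by ring :
      ∀ p ∈ Icc (1:ℤ) (M:ℤ),
      ((u (k+1) p - u k p) / τ - μ * ((w (k+1) p - w k p) / τ)
        + Psi h (fun r => (u (k+1) r + u k r) / 2) (fun r => (u (k+1) r + u k r) / 2) p
        - h ^ 2 / 2 *
            Psi h (fun r => (w (k+1) r + w k r) / 2) (fun r => (u (k+1) r + u k r) / 2) p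
        + Dx h (fun r => (u (k+1) r + u k r) / 2) p
        - h ^ 2 / 6 * Dx h (fun r => (w (k+1) r + w k r) / 2) p
        - lam * ((w (k+1) p + w k p) / 2)) * (u (k+1) p + u k p)
      = (1/τ) * ((u (k+1) p - u k p) * (u (k+1) p + u k p))
        - (μ/τ) * ((w (k+1) p - w k p) * (u (k+1) p + u k p))
        + Psi h (fun r => (u (k+1) r + u k r) / 2) (fun r => (u (k+1) r + u k r) / 2) p
            * (u (k+1) p + u k p)
        - h^2/2 * (Psi h (fun r => (w (k+1) r + w k r) / 2) (fun r => (u (k+1) r + u k r) / 2) p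
            * (u (k+1) p + u k p))
        + Dx h (fun r => (u (k+1) r + u k r) / 2) p * (u (k+1) p + u k p)
        - h^2/6 * (Dx h (fun r => (w (k+1) r + w k r) / 2) p * (u (k+1) p + u k p))
        - lam * ((w (k+1) p + w k p) / 2 * (u (k+1) p + u k p)))]
    simp only [Finset.sum_add_distrib, Finset.sum_sub_distrib, ← Finset.mul_sum]
    ring
  -- evaluations of the seven pairings
  have ev1 : ip M h (fun p => u (k+1) p - u k p) (fun p => u (k+1) p + u k p)
      = ip M h (u (k+1)) (u (k+1)) - ip M h (u k) (u k) := by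
    simp only [ip]
    rw [← mul_sub, ← Finset.sum_sub_distrib]
    congr 1
    exact Finset.sum_congr rfl fun p _ => by ring
  have GGq := relG hua hwa hua hwa hrela hrela
  have GGb := relG hub hwb hub hwb hrelb hrelb
  have cross : ip M h (w (k+1)) (u k) = ip M h (w k) (u (k+1)) :=
    relG_symm hua hwa hub hwb hrela hrelb
  have ev2 : ip M h (fun p => w (k+1) p - w k p) (fun p => u (k+1) p + u k p)
      = ip M h (w (k+1)) (u (k+1)) - ip M h (w k) (u k) := by
    rw [ip_sub_left, ip_add_right, ip_add_right, cross]
    ring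
  have ev3 : ip M h (Psi h (fun r => (u (k+1) r + u k r) / 2) (fun r => (u (k+1) r + u k r) / 2))
      (fun p => u (k+1) p + u k p) = 0 := by
    rw [ip_double, Psi_ortho hUB hUB, mul_zero]
  have ev4 : ip M h (Psi h (fun r => (w (k+1) r + w k r) / 2) (fun r => (u (k+1) r + u k r) / 2))
      (fun p => u (k+1) p + u k p) = 0 := by
    rw [ip_double, Psi_ortho hWB hUB, mul_zero]
  have ev5 : ip M h (Dx h (fun r => (u (k+1) r + u k r) / 2)) (fun p => u (k+1) p + u k p) = 0 := by
    rw [ip_double, Dx_skew_self hUB, mul_zero]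
  have ev6 : ip M h (Dx h (fun r => (w (k+1) r + w k r) / 2)) (fun p => u (k+1) p + u k p) = 0 := by
    rw [ip_double, relX hUB hWB relbar, mul_zero]
  have GGbar := relG hUB hWB hUB hWB relbar relbar
  have ev7 : ip M h (fun r => (w (k+1) r + w k r) / 2) (fun p => u (k+1) p + u k p)
      = 2 * -(sbp M h (fun r => (u (k+1) r + u k r) / 2) (fun r => (u (k+1) r + u k r) / 2)
          + h^2/12 * ip M h (fun r => (w (k+1) r + w k r) / 2) (fun r => (w (k+1) r + w k r) / 2)
          - (h^2/12)^2 * sbp M h (fun r => (w (k+1) r + w k r) / 2) (fun r => (w (k+1) r + w k r) / 2)) := by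
    rw [ip_double, GGbar]
  have E := decomp.symm.trans key
  rw [ev1, ev2, ev3, ev4, ev5, ev6, ev7, GGq, GGb] at E
  field_simp at E
  have E4 : (ip M h (u (k+1)) (u (k+1)) - ip M h (u k) (u k))
      + μ * (sbp M h (u (k+1)) (u (k+1)) + h^2/12 * ip M h (w (k+1)) (w (k+1))
          - h^4/144 * sbp M h (w (k+1)) (w (k+1)))
      - μ * (sbp M h (u k) (u k) + h^2/12 * ip M h (w k) (w k)
          - h^4/144 * sbp M h (w k) (w k))
      + 2 * lam * τ *
          (sbp M h (fun r => (u (k+1) r + u k r) / 2) (fun r => (u (k+1) r + u k r) / 2)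
            + h^2/12 * ip M h (fun r => (w (k+1) r + w k r) / 2) (fun r => (w (k+1) r + w k r) / 2)
            - h^4/144 * sbp M h (fun r => (w (k+1) r + w k r) / 2) (fun r => (w (k+1) r + w k r) / 2))
      = 0 := by
    apply mul_left_cancel₀ hτ'
    rw [mul_zero]
    linear_combination τ / 1728 * E
  -- unfold the energies
  simp only [energy]
  rw [Finset.sum_Icc_succ_top (Nat.le_add_left 1 k)]
  simp only [Nat.add_sub_cancel]
  simp only [nrm_sq hh, snorm1_sq hh]
  linear_combination E4

end EnergyAux

/-- energy conservation of the nonlinear compact difference scheme. -/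
theorem stmt_14 (M : ℕ) (hM : 3 ≤ M) (h : ℝ) (hh : 0 < h) (L : ℝ) (hL : L = M * h)
    (μ lam τ : ℝ) (hμ : 0 < μ) (hlam : 0 < lam) (hτ : 0 < τ)
    (N : ℕ) (hN : 1 ≤ N) (u w : ℕ → ℤ → ℝ)
    (hu : ∀ q ≤ N, Periodic M (u q)) (hw : ∀ q ≤ N, Periodic M (w q))
    (hrel : ∀ q ≤ N, ∀ p : ℤ, w q p = Dxx h (u q) p - h ^ 2 / 12 * Dxx h (w q) p)
    (hscheme : ∀ q, 1 ≤ q → q ≤ N → ∀ p : ℤ,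
      (u q p - u (q - 1) p) / τ - μ * ((w q p - w (q - 1) p) / τ)
        + Psi h (fun r => (u q r + u (q - 1) r) / 2) (fun r => (u q r + u (q - 1) r) / 2) p
        - h ^ 2 / 2 *
            Psi h (fun r => (w q r + w (q - 1) r) / 2) (fun r => (u q r + u (q - 1) r) / 2) p
        + Dx h (fun r => (u q r + u (q - 1) r) / 2) p
        - h ^ 2 / 6 * Dx h (fun r => (w q r + w (q - 1) r) / 2) p
        - lam * ((w q p + w (q - 1) p) / 2) = 0) :
    ∀ q ≤ N, energy M h μ lam τ u w q = energy M h μ lam τ u w 0 := by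
  intro q hq
  induction q with
  | zero => rfl
  | succ k ih =>
    have hk : k ≤ N := by omega
    rw [step M h hh μ lam τ hτ N u w hu hw hrel hscheme k hq]
    exact ih hk
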